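/- Let (X,d) be an unbounded metric space, fix a ∈ X, and on the one-point compactification Ẋ = X ∪ {∞} define d_a(x,y) = d(x,y)/((1+d(x,a))(1+d(y,a))) for x,y ∈ X, d_a(x,∞) = 1/(1+d(x,a)), and d_a(∞,∞) = 0. Define d̂_a(x,y) as the infimum of Σ_{j=1}^k d_a(x_j, x_{j-1}) over all finite chains x = x_0, x_1, …, x_k = y in Ẋ. Then d̂_a is a metric on Ẋ and (1/4) d_a(x,y) ≤ d̂_a(x,y) ≤ d_a(x,y) for all x,y ∈ Ẋ. -/

import Mathlib

/-!
Let `h(x) = 1/(1 + d(x,a))` and `h(∞) = 0` (this is `daHeight a`). Then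
`|h u - h v| ≤ d_a(u,v) ≤ h u + h v`, and `d_a(x,y) = d(x,y) h(x) h(y)` on `X`. Take a chain
from `x` to `y` with sum `S` and let `M = max (h x) (h y)`. If `M ≤ 2S`, then
`d_a(x,y) ≤ 2M ≤ 4S`. Otherwise every point of the chain has height at least `c = M - S > 0`,
so the chain stays in `X`, each step satisfies `d_a ≥ c² d`, and
`S ≥ c² d(x,y) ≥ d(x,y) M² / 4 ≥ d_a(x,y) / 4`. The metric axioms for `d̂_a` then follow
from concatenating and reversing chains.
-/

open Metric Set

/-- The sphericalization quasimetric `d_a` on `Ẋ = X ∪ {∞}` (with `none = ∞`). -/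
noncomputable def da {X : Type*} [MetricSpace X] (a : X) : Option X → Option X → ℝ
  | some x, some y => dist x y / ((1 + dist x a) * (1 + dist y a))
  | some x, none => (1 + dist x a)⁻¹
  | none, some y => (1 + dist y a)⁻¹
  | none, none => 0

/-- The sum `Σ d_a(x_j, x_{j-1})` along a finite chain. -/
noncomputable def chainSum {X : Type*} [MetricSpace X] (a : X) : List (Option X) → ℝ
  | x :: y :: l => da a x y + chainSum a (y :: l)
  | _ => 0

/-- The sphericalization metric `d̂_a`: the infimum of `Σ d_a(x_j,x_{j-1})`
over all finite chains from `x` to `y` in `Ẋ`. -/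
noncomputable def dhat {X : Type*} [MetricSpace X] (a : X) (x y : Option X) : ℝ :=
  sInf { s | ∃ l : List (Option X), (x :: l).getLast? = some y ∧ s = chainSum a (x :: l) }

section Sphericalization

variable {X : Type*} [MetricSpace X] (a : X)

noncomputable def daHeight : Option X → ℝ
  | some x => (1 + dist x a)⁻¹
  | none => 0

lemma daHeight_nonneg : ∀ u : Option X, 0 ≤ daHeight a u
  | some x => by simp only [daHeight]; positivity
  | none => le_rfl

lemma exists_eq_some_of_daHeight_pos {u : Option X} (h : 0 < daHeight a u) :
    ∃ x, u = some x :=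
  Option.ne_none_iff_exists'.mp (by rintro rfl; exact h.false)

lemma da_some_some (x y : X) :
    da a (some x) (some y) = dist x y * daHeight a (some x) * daHeight a (some y) := by
  simp only [da, daHeight, div_eq_mul_inv, mul_inv, mul_assoc]

lemma da_nonneg (u v : Option X) : 0 ≤ da a u v := by
  cases u <;> cases v <;> simp only [da] <;> positivity

lemma da_comm (u v : Option X) : da a u v = da a v u := by
  cases u <;> cases v <;> simp only [da, dist_comm, mul_comm]

@[simp] lemma da_self (u : Option X) : da a u u = 0 := by
  cases u <;> simp [da]

lemma da_eq_zero {u v : Option X} : da a u v = 0 ↔ u = v := by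
  refine ⟨fun h => ?_, fun h => h ▸ da_self a u⟩
  have hpos (x : X) : 1 + dist x a ≠ 0 := by positivity
  cases u <;> cases v <;> simp_all [da]

lemma abs_daHeight_sub_le_da : ∀ u v : Option X, |daHeight a u - daHeight a v| ≤ da a u v
  | some x, some y => by
      have hx : 0 < 1 + dist x a := by positivity
      have hy : 0 < 1 + dist y a := by positivity
      simp only [daHeight, da]
      rw [inv_sub_inv hx.ne' hy.ne', abs_div, abs_of_pos (mul_pos hx hy)]
      gcongr
      calc |1 + dist y a - (1 + dist x a)| = |dist y a - dist x a| := by ring_nf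
        _ ≤ dist x y := by rw [dist_comm x y]; exact abs_dist_sub_le y x a
  | some x, none | none, some x => by
      simp only [daHeight, da, sub_zero, zero_sub, abs_neg]
      exact (abs_of_nonneg (by positivity)).le
  | none, none => by simp [da]

lemma da_le_daHeight_add : ∀ u v : Option X, da a u v ≤ daHeight a u + daHeight a v
  | some x, some y => by
      have hx : 0 < 1 + dist x a := by positivity
      have hy : 0 < 1 + dist y a := by positivity
      simp only [daHeight, da]
      rw [div_le_iff₀ (mul_pos hx hy), add_mul, inv_mul_cancel_left₀ hx.ne',
        mul_comm (1 + dist x a), inv_mul_cancel_left₀ hy.ne']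
      linarith [dist_triangle_right x y a]
  | some x, none | none, some x | none, none => by simp [daHeight, da]

lemma mul_dist_le_da {c : ℝ} (hc : 0 ≤ c) {x y : X} (hx : c ≤ daHeight a (some x))
    (hy : c ≤ daHeight a (some y)) : c * c * dist x y ≤ da a (some x) (some y) := by
  rw [da_some_some, mul_comm (c * c), mul_assoc]
  gcongr
  exact hc.trans hx

@[simp] lemma chainSum_cons_cons (u v : Option X) (l : List (Option X)) :
    chainSum a (u :: v :: l) = da a u v + chainSum a (v :: l) := rfl

lemma chainSum_nonneg : ∀ l : List (Option X), 0 ≤ chainSum a l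
  | u :: v :: l => add_nonneg (da_nonneg a u v) (chainSum_nonneg (v :: l))
  | [] | [_] => le_rfl

lemma chainSum_append_cons :
    ∀ (l₁ : List (Option X)) (u : Option X) (l₂ : List (Option X)),
      chainSum a (l₁ ++ u :: l₂) = chainSum a (l₁ ++ [u]) + chainSum a (u :: l₂)
  | [], _, _ => by simp [chainSum]
  | [_], _, _ => by simp [chainSum]
  | v :: w :: l₁, u, l₂ => by
      have ih := chainSum_append_cons (w :: l₁) u l₂
      simp only [List.cons_append, chainSum_cons_cons] at ih ⊢
      rw [ih, add_assoc]

lemma chainSum_reverse : ∀ l : List (Option X), chainSum a l.reverse = chainSum a l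
  | [] | [_] => rfl
  | u :: v :: l => by
      rw [List.reverse_cons, List.reverse_cons, List.append_assoc, List.singleton_append,
        chainSum_append_cons, ← List.reverse_cons, chainSum_reverse (v :: l)]
      simp [chainSum, da_comm a u v, add_comm]

lemma abs_daHeight_sub_add_abs_le_chainSum :
    ∀ (l : List (Option X)) (x y u : Option X), (x :: l).getLast? = some y → u ∈ x :: l →
      |daHeight a x - daHeight a u| + |daHeight a u - daHeight a y| ≤ chainSum a (x :: l)
  | [], x, y, u, hl, hu => by
      simp only [List.getLast?_singleton, Option.some.injEq, List.mem_singleton] at hl hu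
      simp [hl, hu, chainSum]
  | z :: l, x, y, u, hl, hu => by
      rw [List.getLast?_cons_cons] at hl
      have hxz := abs_daHeight_sub_le_da a x z
      rw [chainSum_cons_cons]
      rcases List.mem_cons.mp hu with rfl | hu
      · have h := abs_daHeight_sub_add_abs_le_chainSum l z y z hl List.mem_cons_self
        simp only [sub_self, abs_zero, zero_add] at h ⊢
        linarith [abs_sub_le (daHeight a u) (daHeight a z) (daHeight a y)]
      · have h := abs_daHeight_sub_add_abs_le_chainSum l z y u hl hu
        linarith [abs_sub_le (daHeight a x) (daHeight a z) (daHeight a u)]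

lemma mul_dist_le_chainSum {c : ℝ} (hc : 0 < c) :
    ∀ (l : List (Option X)) (x y : X), (some x :: l).getLast? = some (some y) →
      (∀ u ∈ some x :: l, c ≤ daHeight a u) → c * c * dist x y ≤ chainSum a (some x :: l)
  | [], x, y, hl, _ => by
      simp only [List.getLast?_singleton, Option.some.injEq] at hl
      simp [hl, chainSum]
  | z :: l, x, y, hl, high => by
      rw [List.getLast?_cons_cons] at hl
      have hz := high z (List.mem_cons_of_mem _ List.mem_cons_self)
      obtain ⟨z, rfl⟩ := exists_eq_some_of_daHeight_pos a (hc.trans_le hz)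
      have hxz := mul_dist_le_da a hc.le (high _ List.mem_cons_self) hz
      have hzy := mul_dist_le_chainSum hc l z y hl fun u hu => high u (List.mem_cons_of_mem _ hu)
      calc c * c * dist x y ≤ c * c * dist x z + c * c * dist z y := by
            rw [← mul_add]; gcongr; exact dist_triangle x z y
        _ ≤ chainSum a (some x :: some z :: l) := add_le_add hxz hzy

lemma da_le_four_mul_chainSum {l : List (Option X)} {x y : Option X}
    (hl : (x :: l).getLast? = some y) : da a x y ≤ 4 * chainSum a (x :: l) := by
  set S := chainSum a (x :: l)
  set M := max (daHeight a x) (daHeight a y)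
  have hxM : daHeight a x ≤ M := le_max_left _ _
  have hyM : daHeight a y ≤ M := le_max_right _ _
  rcases le_or_gt M (2 * S) with hM | hM
  · linarith [da_le_daHeight_add a x y]
  have hc : 0 < M - S := by linarith [chainSum_nonneg a (x :: l)]
  have high (u) (hu : u ∈ x :: l) : M - S ≤ daHeight a u := by
    have h := abs_daHeight_sub_add_abs_le_chainSum a l x y u hl hu
    have := le_abs_self (daHeight a x - daHeight a u)
    have := neg_abs_le (daHeight a u - daHeight a y)
    have := abs_nonneg (daHeight a x - daHeight a u)
    have := abs_nonneg (daHeight a u - daHeight a y)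
    exact sub_le_iff_le_add.mpr (max_le (by linarith) (by linarith))
  obtain ⟨x, rfl⟩ := exists_eq_some_of_daHeight_pos a (hc.trans_le (high x List.mem_cons_self))
  obtain ⟨y, rfl⟩ :=
    exists_eq_some_of_daHeight_pos a (hc.trans_le (high y (List.mem_of_getLast? hl)))
  calc da a (some x) (some y) = dist x y * daHeight a (some x) * daHeight a (some y) :=
        da_some_some a x y
    _ ≤ dist x y * (2 * (M - S)) * (2 * (M - S)) := by
        have := daHeight_nonneg a (some x)
        have := daHeight_nonneg a (some y)
        gcongr <;> linarith
    _ = 4 * ((M - S) * (M - S) * dist x y) := by ring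
    _ ≤ 4 * S := by gcongr; exact mul_dist_le_chainSum a hc l x y hl high

lemma dhat_le_chainSum {x y : Option X} {l : List (Option X)}
    (hl : (x :: l).getLast? = some y) : dhat a x y ≤ chainSum a (x :: l) :=
  csInf_le ⟨0, by rintro _ ⟨l, -, rfl⟩; exact chainSum_nonneg a _⟩ ⟨l, hl, rfl⟩

lemma le_dhat {x y : Option X} {c : ℝ}
    (h : ∀ l, (x :: l).getLast? = some y → c ≤ chainSum a (x :: l)) : c ≤ dhat a x y :=
  le_csInf ⟨_, [y], rfl, rfl⟩ (by rintro _ ⟨l, hl, rfl⟩; exact h l hl)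

lemma dhat_nonneg (x y : Option X) : 0 ≤ dhat a x y :=
  le_dhat a fun l _ => chainSum_nonneg a (x :: l)

lemma dhat_le_da (x y : Option X) : dhat a x y ≤ da a x y := by
  simpa [chainSum] using dhat_le_chainSum a (l := [y]) rfl

lemma inv_four_mul_da_le_dhat (x y : Option X) : 4⁻¹ * da a x y ≤ dhat a x y :=
  le_dhat a fun _ hl => by linarith [da_le_four_mul_chainSum a hl]

lemma dhat_self (x : Option X) : dhat a x x = 0 :=
  le_antisymm (by simpa using dhat_le_da a x x) (dhat_nonneg a x x)

lemma eq_of_dhat_eq_zero {x y : Option X} (h : dhat a x y = 0) : x = y :=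
  (da_eq_zero a).mp <|
    le_antisymm (by linarith [inv_four_mul_da_le_dhat a x y]) (da_nonneg a x y)

lemma dhat_le_dhat_swap (x y : Option X) : dhat a y x ≤ dhat a x y := by
  refine le_dhat a fun l hl => ?_
  obtain ⟨m, hm⟩ := List.head?_eq_some_iff.mp (List.head?_reverse.trans hl)
  rw [← chainSum_reverse, hm]
  exact dhat_le_chainSum a (by rw [← hm, List.getLast?_reverse]; rfl)

lemma dhat_comm (x y : Option X) : dhat a x y = dhat a y x :=
  le_antisymm (dhat_le_dhat_swap a y x) (dhat_le_dhat_swap a x y)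

lemma dhat_le_chainSum_add_chainSum {x y z : Option X} {l₁ l₂ : List (Option X)}
    (h₁ : (x :: l₁).getLast? = some y) (h₂ : (y :: l₂).getLast? = some z) :
    dhat a x z ≤ chainSum a (x :: l₁) + chainSum a (y :: l₂) := by
  obtain ⟨s, hs⟩ := List.getLast?_eq_some_iff.mp h₁
  have hconcat : x :: (l₁ ++ l₂) = s ++ y :: l₂ := by
    rw [← List.cons_append, hs, List.append_assoc, List.singleton_append]
  rw [hs, ← chainSum_append_cons, ← hconcat]
  exact dhat_le_chainSum a (by rw [hconcat, List.getLast?_append, h₂]; rfl)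

lemma dhat_triangle (x y z : Option X) : dhat a x z ≤ dhat a x y + dhat a y z := by
  suffices dhat a x z - dhat a y z ≤ dhat a x y by linarith
  refine le_dhat a fun l₁ h₁ => ?_
  suffices dhat a x z - chainSum a (x :: l₁) ≤ dhat a y z by linarith
  exact le_dhat a fun l₂ h₂ => by linarith [dhat_le_chainSum_add_chainSum a h₁ h₂]

end Sphericalization

theorem dhat_is_metric_and_comparable {X : Type*} [MetricSpace X] (a : X) :
    (∀ x : Option X, dhat a x x = 0) ∧
    (∀ x y : Option X, dhat a x y = dhat a y x) ∧
    (∀ x y z : Option X, dhat a x z ≤ dhat a x y + dhat a y z) ∧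
    (∀ x y : Option X, dhat a x y = 0 → x = y) ∧
    (∀ x y : Option X, 4⁻¹ * da a x y ≤ dhat a x y ∧ dhat a x y ≤ da a x y) :=
  ⟨dhat_self a, dhat_comm a, dhat_triangle a, fun _ _ => eq_of_dhat_eq_zero a,
    fun x y => ⟨inv_four_mul_da_le_dhat a x y, dhat_le_da a x y⟩⟩
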